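/- For a simple digraph G with n vertices and a edges, the energy satisfies E(G) ≤ Σ_{i=1}^n √(d^+(v_i)) ≤ √(an). -/

import Mathlib

open Matrix Finset

noncomputable section

/-- For a real matrix, `A * Aᵀ` is positive semidefinite. -/
theorem mulTranspose_posSemidef {m k : Type*} [Fintype m] [Fintype k] (A : Matrix m k ℝ) :
    (A * Aᵀ).PosSemidef := by
  have h := Matrix.posSemidef_self_mul_conjTranspose A
  rwa [Matrix.conjTranspose_eq_transpose_of_trivial] at h

/-- For a real matrix, `Aᵀ * A` is positive semidefinite. -/
theorem transposeMul_posSemidef {m k : Type*} [Fintype m] [Fintype k] (A : Matrix m k ℝ) :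
    (Aᵀ * A).PosSemidef := by
  simpa using mulTranspose_posSemidef Aᵀ

/-- The positive semidefinite square root of a positive semidefinite matrix
(the Mathlib definition of December 2024, since removed from Mathlib). -/
def Matrix.PosSemidef.sqrt {n : Type*} [Fintype n] [DecidableEq n]
    {A : Matrix n n ℝ} (hA : A.PosSemidef) : Matrix n n ℝ :=
  hA.1.eigenvectorUnitary.1 * diagonal ((√·) ∘ hA.1.eigenvalues) *
  (star hA.1.eigenvectorUnitary : Matrix n n ℝ)

lemma Matrix.PosSemidef.posSemidef_sqrt {n : Type*} [Fintype n] [DecidableEq n]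
    {A : Matrix n n ℝ} (hA : A.PosSemidef) : hA.sqrt.PosSemidef := by
  unfold Matrix.PosSemidef.sqrt
  have h : (diagonal ((√·) ∘ hA.1.eigenvalues)).PosSemidef :=
    Matrix.PosSemidef.diagonal fun i => Real.sqrt_nonneg _
  exact h.mul_mul_conjTranspose_same _

lemma Matrix.PosSemidef.sqrt_mul_self {n : Type*} [Fintype n] [DecidableEq n]
    {A : Matrix n n ℝ} (hA : A.PosSemidef) : hA.sqrt * hA.sqrt = A := by
  unfold Matrix.PosSemidef.sqrt
  have hU : (star hA.1.eigenvectorUnitary : Matrix n n ℝ) * hA.1.eigenvectorUnitary.1 = 1 :=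
    Matrix.UnitaryGroup.star_mul_self _
  have hD : diagonal ((√·) ∘ hA.1.eigenvalues) * diagonal ((√·) ∘ hA.1.eigenvalues)
      = diagonal (RCLike.ofReal ∘ hA.1.eigenvalues) := by
    rw [diagonal_mul_diagonal]
    congr 1; funext i
    simp [Real.mul_self_sqrt (hA.eigenvalues_nonneg i)]
  conv_rhs => rw [hA.1.spectral_theorem]
  rw [Unitary.conjStarAlgAut_apply]
  calc _ = hA.1.eigenvectorUnitary.1 * diagonal ((√·) ∘ hA.1.eigenvalues) *
      ((star hA.1.eigenvectorUnitary : Matrix n n ℝ) * hA.1.eigenvectorUnitary.1) *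
      diagonal ((√·) ∘ hA.1.eigenvalues) * (star hA.1.eigenvectorUnitary : Matrix n n ℝ) := by
        simp only [Matrix.mul_assoc]
    _ = _ := by rw [hU, Matrix.mul_one, Matrix.mul_assoc _ (diagonal _) (diagonal _), hD]

/-- `|A|⁺ = (A Aᵀ)^{1/2}` (psd square root). -/
def absPlus {V : Type*} [Fintype V] [DecidableEq V] (A : Matrix V V ℝ) : Matrix V V ℝ :=
  (mulTranspose_posSemidef A).sqrt

/-- `|A|⁻ = (Aᵀ A)^{1/2}` (psd square root). -/
def absMinus {V : Type*} [Fintype V] [DecidableEq V] (A : Matrix V V ℝ) : Matrix V V ℝ :=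
  (transposeMul_posSemidef A).sqrt

/-- The (Nikiforov) energy: `Tr((A Aᵀ)^{1/2})`, the sum of the singular values of `A`. -/
def energy {V : Type*} [Fintype V] [DecidableEq V] (A : Matrix V V ℝ) : ℝ := (absPlus A).trace

/-- 0-1 adjacency matrix of the digraph with edge relation `E`. -/
def adjMat {V : Type*} [Fintype V] [DecidableEq V] (E : V → V → Prop) [DecidableRel E] :
    Matrix V V ℝ := Matrix.of fun i j => if E i j then 1 else 0

/-- Out-degree `d⁺(v)`. -/
def outDeg {V : Type*} [Fintype V] (E : V → V → Prop) [DecidableRel E] (v : V) : ℕ :=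
  (univ.filter (fun w => E v w)).card

/-- In-degree `d⁻(w)`. -/
def inDeg {V : Type*} [Fintype V] (E : V → V → Prop) [DecidableRel E] (w : V) : ℕ :=
  (univ.filter (fun v => E v w)).card

/-- Directed Randic index `R(G) = (1/2) Σ_{(v,w)∈E} 1/√(d⁺(v) d⁻(w))`. -/
def randic {V : Type*} [Fintype V] (E : V → V → Prop) [DecidableRel E] : ℝ :=
  (1/2) * ∑ v, ∑ w, if E v w then 1 / Real.sqrt (outDeg E v * inDeg E w) else 0

/-- Number of arcs of the digraph. -/
def numArcs {V : Type*} [Fintype V] (E : V → V → Prop) [DecidableRel E] : ℕ :=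
  (univ.filter (fun p : V × V => E p.1 p.2)).card

/-- Maximum over vertices of in- and out-degrees, `Δ(G)`. -/
def maxDeg {V : Type*} [Fintype V] (E : V → V → Prop) [DecidableRel E] : ℕ :=
  univ.sup (fun v => max (outDeg E v) (inDeg E v))

lemma sqrtDiagNonneg {V : Type*} [Fintype V] [DecidableEq V] {M : Matrix V V ℝ}
    (hM : M.PosSemidef) (i : V) : 0 ≤ hM.sqrt i i := by
  exact hM.posSemidef_sqrt.diag_nonneg

lemma numArcs_eq_sum {n : ℕ} (E : Fin n → Fin n → Prop) [DecidableRel E] :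
    (numArcs E : ℕ) = ∑ i, outDeg E i := by
  rw [numArcs, Finset.card_filter, Fintype.sum_prod_type]
  simp only [outDeg, Finset.card_filter]

lemma sqrtDiagSqLe {V : Type*} [Fintype V] [DecidableEq V] {M : Matrix V V ℝ}
    (hM : M.PosSemidef) (i : V) : hM.sqrt i i ^ 2 ≤ M i i := by
  have h : M i i = ∑ j, hM.sqrt i j ^ 2 := by
    conv_lhs => rw [← hM.sqrt_mul_self]
    rw [Matrix.mul_apply]
    refine Finset.sum_congr rfl fun j _ => ?_
    have := hM.posSemidef_sqrt.isHermitian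
    rw [sq]
    congr 1
    exact (Matrix.IsHermitian.apply this j i).symm.trans (by simp)
  rw [h]
  exact Finset.single_le_sum (f := fun j => hM.sqrt i j ^ 2) (fun j _ => sq_nonneg _)
    (Finset.mem_univ i)

lemma sqrtDiagLe {V : Type*} [Fintype V] [DecidableEq V] {M : Matrix V V ℝ}
    (hM : M.PosSemidef) (i : V) : hM.sqrt i i ≤ Real.sqrt (M i i) := by
  calc hM.sqrt i i = Real.sqrt (hM.sqrt i i ^ 2) := by rw [Real.sqrt_sq (sqrtDiagNonneg hM i)]
  _ ≤ Real.sqrt (M i i) := Real.sqrt_le_sqrt (sqrtDiagSqLe hM i)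

lemma adjDiag {n : ℕ} (E : Fin n → Fin n → Prop) [DecidableRel E] (i : Fin n) :
    (adjMat E * (adjMat E)ᵀ) i i = (outDeg E i : ℝ) := by
  rw [Matrix.mul_apply]
  simp only [adjMat, Matrix.transpose_apply, Matrix.of_apply, outDeg, Finset.card_filter]
  push_cast
  refine Finset.sum_congr rfl fun j _ => ?_
  by_cases h : E i j <;> simp [h]
/-- McClelland-type inequality: `E(G) ≤ Σ_i √(d⁺(v_i)) ≤ √(a n)`. -/
theorem stmt_7 {n : ℕ} (E : Fin n → Fin n → Prop) [DecidableRel E]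
    (hloop : ∀ v, ¬ E v v) :
    energy (adjMat E) ≤ ∑ i, Real.sqrt (outDeg E i) ∧
    ∑ i, Real.sqrt (outDeg E i) ≤ Real.sqrt ((numArcs E : ℝ) * n) := by
  constructor
  · rw [energy, absPlus, Matrix.trace]
    refine Finset.sum_le_sum fun i _ => ?_
    calc (mulTranspose_posSemidef (adjMat E)).sqrt i i
        ≤ Real.sqrt ((adjMat E * (adjMat E)ᵀ) i i) := sqrtDiagLe _ i
      _ = Real.sqrt (outDeg E i) := by rw [adjDiag]
  · have hsum : 0 ≤ ∑ i, Real.sqrt (outDeg E i) :=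
      Finset.sum_nonneg fun i _ => Real.sqrt_nonneg _
    have hsq : (∑ i, Real.sqrt (outDeg E i)) ^ 2 ≤ (numArcs E : ℝ) * n := by
      calc (∑ i, Real.sqrt ((outDeg E i : ℝ))) ^ 2
          ≤ #(univ : Finset (Fin n)) * ∑ i, Real.sqrt ((outDeg E i : ℝ)) ^ 2 :=
            sq_sum_le_card_mul_sum_sq
        _ = (numArcs E : ℝ) * n := by
            rw [Finset.card_univ, Fintype.card_fin]
            have : ∑ i, Real.sqrt ((outDeg E i : ℝ)) ^ 2 = (numArcs E : ℝ) := by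
              rw [numArcs_eq_sum]
              push_cast
              exact Finset.sum_congr rfl fun i _ => Real.sq_sqrt (by positivity)
            rw [this]; ring
    calc ∑ i, Real.sqrt (outDeg E i)
        = Real.sqrt ((∑ i, Real.sqrt (outDeg E i)) ^ 2) := (Real.sqrt_sq hsum).symm
      _ ≤ Real.sqrt ((numArcs E : ℝ) * n) := Real.sqrt_le_sqrt hsq
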